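/- arXiv:2008.01020 — 6 statements merged into one kernel-verified Lean document; each statement's English description precedes it below -/
import Mathlib

section
/- Let N ≥ 1 and let χ¹, χ² be the vanishing-order sequences of two partitions of N. Then the nodal sequence χ_k := max(1, χ¹_k + χ²_k − k) is nondecreasing on {1,…,N}. -/
/-- `p` (with parts indexed from 1) is a partition of `N`: the parts are
nonincreasing, sum to `N`, and vanish beyond index `N`. -/
def IsPartitionOf (N : ℕ) (p : ℕ → ℕ) : Prop :=
  (∀ i, 1 ≤ i → p (i + 1) ≤ p i) ∧
  (∑ j ∈ Finset.Icc 1 N, p j = N) ∧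
  (∀ i, N < i → p i = 0)

/-- The vanishing order at `k` of the partition `p`: the least positive
integer `i` such that `p 1 + ⋯ + p i ≥ k`. -/
noncomputable def chiOf (p : ℕ → ℕ) (k : ℕ) : ℕ :=
  sInf {i | 1 ≤ i ∧ k ≤ ∑ j ∈ Finset.Icc 1 i, p j}

/-- `χ` is the vanishing-order sequence, on `{1,…,N}`, of the partition `p` of `N`. -/
def IsVanishingOrderSeq (N : ℕ) (p : ℕ → ℕ) (χ : ℕ → ℕ) : Prop :=
  IsPartitionOf N p ∧ ∀ k, 1 ≤ k → k ≤ N → χ k = chiOf p k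

/-!
If `χ_k = χ_{k+1} = a`, then `p_a ≥ 2` (the partial sum jumps past both `k` and `k + 1` at `a`),
so every part `p_1, …, p_a` is at least `2`; as `p_1 + ⋯ + p_{a-1} < k`, this forces
`2a ≤ k + 1`. Hence when both `χ¹` and `χ²` stay constant from `k` to `k + 1` we have
`χ¹_k + χ²_k - k ≤ 1`, and otherwise `χ¹_k + χ²_k` grows by at least one, compensating `k`.
-/

open Finset

section VanishingOrder

variable {p : ℕ → ℕ} {k k' n : ℕ}

theorem chiOf_spec (hn : 1 ≤ n) (hk : k ≤ ∑ j ∈ Icc 1 n, p j) :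
    1 ≤ chiOf p k ∧ k ≤ ∑ j ∈ Icc 1 (chiOf p k), p j :=
  Nat.sInf_mem (s := {i | 1 ≤ i ∧ k ≤ ∑ j ∈ Icc 1 i, p j}) ⟨n, hn, hk⟩

theorem chiOf_le (hn : 1 ≤ n) (hk : k ≤ ∑ j ∈ Icc 1 n, p j) : chiOf p k ≤ n :=
  Nat.sInf_le ⟨hn, hk⟩

theorem sum_Icc_lt_of_lt_chiOf (hk : 1 ≤ k) (h : n < chiOf p k) : ∑ j ∈ Icc 1 n, p j < k := by
  rcases Nat.eq_zero_or_pos n with rfl | hn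
  · rwa [Icc_eq_empty (by omega), sum_empty]
  · by_contra! hsum
    exact (chiOf_le hn hsum).not_gt h

theorem chiOf_mono (hn : 1 ≤ n) (hk' : k' ≤ ∑ j ∈ Icc 1 n, p j) (hkk' : k ≤ k') :
    chiOf p k ≤ chiOf p k' :=
  have h := chiOf_spec hn hk'
  chiOf_le h.1 (hkk'.trans h.2)

theorem two_mul_chiOf_le_of_chiOf_succ_eq (hp : AntitoneOn p (Set.Ici 1)) (hk : 1 ≤ k)
    (hn : 1 ≤ n) (hkn : k + 1 ≤ ∑ j ∈ Icc 1 n, p j) (heq : chiOf p (k + 1) = chiOf p k) :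
    2 * chiOf p k ≤ k + 1 := by
  obtain ⟨hpos, hcover⟩ := chiOf_spec hn hkn
  rw [heq] at hpos hcover
  obtain ⟨m, hm⟩ : ∃ m, chiOf p k = m + 1 := Nat.exists_eq_add_one.mpr hpos
  rw [hm, sum_Icc_succ_top (by omega)] at hcover
  have hbefore : ∑ j ∈ Icc 1 m, p j < k := sum_Icc_lt_of_lt_chiOf hk (by omega)
  have hlast : 2 ≤ p (m + 1) := by omega
  have hparts : #(Icc 1 m) • 2 ≤ ∑ j ∈ Icc 1 m, p j := by
    refine card_nsmul_le_sum _ _ _ fun j hj => hlast.trans ?_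
    rw [mem_Icc] at hj
    exact hp (Set.mem_Ici.mpr hj.1) (Set.mem_Ici.mpr (by omega)) (by omega)
  rw [Nat.card_Icc, smul_eq_mul] at hparts
  omega

end VanishingOrder

def nodalSeq (χ₁ χ₂ : ℕ → ℕ) (k : ℕ) : ℤ :=
  max 1 ((χ₁ k : ℤ) + (χ₂ k : ℤ) - (k : ℤ))

section Partition

variable {N k : ℕ} {p p₁ p₂ : ℕ → ℕ}

theorem IsPartitionOf.le_sum (hp : IsPartitionOf N p) (hk : k ≤ N) :
    k ≤ ∑ j ∈ Icc 1 N, p j :=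
  hp.2.1.symm ▸ hk

theorem IsPartitionOf.antitoneOn (hp : IsPartitionOf N p) : AntitoneOn p (Set.Ici 1) :=
  antitoneOn_nat_Ici_of_succ_le hp.1

theorem nodalSeq_chiOf_le_succ (hp₁ : IsPartitionOf N p₁) (hp₂ : IsPartitionOf N p₂)
    (hk : 1 ≤ k) (hkN : k + 1 ≤ N) :
    nodalSeq (chiOf p₁) (chiOf p₂) k ≤ nodalSeq (chiOf p₁) (chiOf p₂) (k + 1) := by
  have hN : 1 ≤ N := by omega
  have hmono₁ := chiOf_mono hN (hp₁.le_sum hkN) k.le_succ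
  have hmono₂ := chiOf_mono hN (hp₂.le_sum hkN) k.le_succ
  by_cases hconst : chiOf p₁ (k + 1) = chiOf p₁ k ∧ chiOf p₂ (k + 1) = chiOf p₂ k
  · have h₁ := two_mul_chiOf_le_of_chiOf_succ_eq hp₁.antitoneOn hk hN (hp₁.le_sum hkN) hconst.1
    have h₂ := two_mul_chiOf_le_of_chiOf_succ_eq hp₂.antitoneOn hk hN (hp₂.le_sum hkN) hconst.2
    have hsmall : (chiOf p₁ k : ℤ) + chiOf p₂ k - k ≤ 1 := by omega
    exact (max_eq_left hsmall).trans_le (le_max_left _ _)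
  · exact max_le_max le_rfl (by push_cast; omega)

theorem monotoneOn_nodalSeq {χ₁ χ₂ : ℕ → ℕ} (h₁ : IsVanishingOrderSeq N p₁ χ₁)
    (h₂ : IsVanishingOrderSeq N p₂ χ₂) : MonotoneOn (nodalSeq χ₁ χ₂) (Set.Icc 1 N) := by
  refine monotoneOn_of_le_add_one Set.ordConnected_Icc fun k _ hk hk' => ?_
  rw [Set.mem_Icc] at hk hk'
  have hstep := nodalSeq_chiOf_le_succ h₁.1 h₂.1 hk.1 hk'.2
  simpa only [nodalSeq, h₁.2 k hk.1 hk.2, h₂.2 k hk.1 hk.2, h₁.2 (k + 1) hk'.1 hk'.2,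
    h₂.2 (k + 1) hk'.1 hk'.2] using hstep

end Partition

theorem nodal_sequence_monotone_general
    (N : ℕ) (p₁ p₂ χ₁ χ₂ : ℕ → ℕ)
    (h1 : IsVanishingOrderSeq N p₁ χ₁)
    (h2 : IsVanishingOrderSeq N p₂ χ₂) :
    ∀ k k', 1 ≤ k → k ≤ k' → k' ≤ N →
      max 1 ((χ₁ k : ℤ) + (χ₂ k : ℤ) - (k : ℤ)) ≤
        max 1 ((χ₁ k' : ℤ) + (χ₂ k' : ℤ) - (k' : ℤ)) :=
  fun _ _ hk hkk' hk'N =>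
    monotoneOn_nodalSeq h1 h2 ⟨hk, hkk'.trans hk'N⟩ ⟨hk.trans hkk', hk'N⟩ hkk'

/-- the nodal sequence `max(1, χ¹_k + χ²_k − k)` is nondecreasing. -/
theorem nodal_sequence_monotone
    (N : ℕ) (hN : 1 ≤ N) (p₁ p₂ χ₁ χ₂ : ℕ → ℕ)
    (h1 : IsVanishingOrderSeq N p₁ χ₁)
    (h2 : IsVanishingOrderSeq N p₂ χ₂) :
    ∀ k k', 1 ≤ k → k ≤ k' → k' ≤ N →
      max 1 ((χ₁ k : ℤ) + (χ₂ k : ℤ) - (k : ℤ)) ≤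
        max 1 ((χ₁ k' : ℤ) + (χ₂ k' : ℤ) - (k' : ℤ)) :=
  nodal_sequence_monotone_general N p₁ p₂ χ₁ χ₂ h1 h2
end

section
/- Let N ≥ 2 and let χ¹, χ² be the vanishing-order sequences of two nonzero partitions of N. Then the nodal sequence χ_k := max(1, χ¹_k + χ²_k − k), k ∈ {1,…,N}, is itself the vanishing-order sequence of some partition of N; that is, χ is nondecreasing, χ₁ = 1, and the multiplicity function i ↦ #{k ∈ {1,…,N} : χ_k = i} is nonincreasing on positive integers i. -/
/-!
Write `Sᵢ` for the partial sums of `pᵢ`; they are concave, and `χⁱ` is their generalized inverse.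
The nodal sequence `χ` is nondecreasing with steps of size at most one: it can only drop where
neither `χⁱ` moves, which forces all parts up to `χⁱ_k` to be at least `2`, hence
`χ¹_k + χ²_k ≤ k + 1` and `χ_k = 1`. So `χ` is the vanishing-order sequence of its fibre sizes `q`,
and it remains to see that `q` is nonincreasing. Where `χ` steps from `i` to `i + 1`, at `t` say,
both partial sums take the value `t`, at arguments `a, b` with `a + b = t + i`. Between two
consecutive such steps, `S₁` and `S₂` both rise by `q i` over runs of total length `q i + 1`;
concavity bounds the next rise `q (i + 1)` of each `Sᵢ` by its previous slope times its next run,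
and summing over the two partitions gives `q (i + 1) ≤ q i`.
-/

open Finset

def partialSum (p : ℕ → ℕ) (a : ℕ) : ℕ := ∑ j ∈ Icc 1 a, p j

@[simp] lemma partialSum_zero (p : ℕ → ℕ) : partialSum p 0 = 0 := by simp [partialSum]

lemma partialSum_add_sum_Ioc (p : ℕ → ℕ) {a b : ℕ} (hab : a ≤ b) :
    partialSum p a + ∑ j ∈ Ioc a b, p j = partialSum p b := by
  have hIcc (c : ℕ) : Icc 1 c = Ioc 0 c := Icc_add_one_left_eq_Ioc 0 c
  rw [partialSum, partialSum, hIcc, hIcc]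
  exact sum_Ioc_consecutive p (Nat.zero_le a) hab

lemma partialSum_succ (p : ℕ → ℕ) (a : ℕ) : partialSum p (a + 1) = partialSum p a + p (a + 1) :=
  sum_Icc_succ_top (Nat.le_add_left 1 a) p

lemma partialSum_mono (p : ℕ → ℕ) : Monotone (partialSum p) := fun _ _ h =>
  sum_le_sum_of_subset (Icc_subset_Icc_right h)

namespace IsPartitionOf

variable {N : ℕ} {p : ℕ → ℕ} {a b k l : ℕ}

lemma antitone (hp : IsPartitionOf N p) {i j : ℕ} (hi : 1 ≤ i) (hij : i ≤ j) : p j ≤ p i :=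
  Nat.rel_of_forall_rel_succ_of_le_of_le (· ≥ ·) (fun n hn => hp.1 n (hi.trans hn)) le_rfl hij

lemma partialSum_self (hp : IsPartitionOf N p) : partialSum p N = N := hp.2.1

lemma partialSum_of_eq_zero (hp : IsPartitionOf N p) (ha : 1 ≤ a) (h0 : p a = 0) :
    partialSum p a = N := by
  have hzero : ∀ j, a ≤ j → p j = 0 := fun j hj => Nat.eq_zero_of_le_zero (h0 ▸ hp.antitone ha hj)
  rcases le_total a N with h | h
  · rw [← hp.partialSum_self, ← partialSum_add_sum_Ioc p h,
      sum_eq_zero fun j hj => hzero j (mem_Ioc.1 hj).1.le, add_zero]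
  · rw [← partialSum_add_sum_Ioc p h, sum_eq_zero fun j hj => hp.2.2 j (mem_Ioc.1 hj).1,
      add_zero, hp.partialSum_self]

lemma mul_le_partialSum (hp : IsPartitionOf N p) (hab : a ≤ b) : a * p b ≤ partialSum p a := by
  simpa [partialSum] using card_nsmul_le_sum (Icc 1 a) p (p b) fun j hj =>
    hp.antitone (mem_Icc.1 hj).1 ((mem_Icc.1 hj).2.trans hab)

lemma le_partialSum (hp : IsPartitionOf N p) (hk : k ≤ N) : k ≤ partialSum p k := by
  rcases Nat.eq_zero_or_pos k with rfl | hk1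
  · exact le_rfl
  rcases Nat.eq_zero_or_pos (p k) with h0 | h1
  · exact (hp.partialSum_of_eq_zero hk1 h0).symm ▸ hk
  · simpa using (Nat.mul_le_mul_left k h1).trans (hp.mul_le_partialSum le_rfl)

/-- Concavity of the partial sums, as an inequality between chord slopes. -/
lemma partialSum_chord (hp : IsPartitionOf N p) {a₀ a₁ a₂ : ℕ} (h₀₁ : a₀ ≤ a₁)
    (h₁₂ : a₁ ≤ a₂) :
    (partialSum p a₂ - partialSum p a₁) * (a₁ - a₀) ≤
      (a₂ - a₁) * (partialSum p a₁ - partialSum p a₀) := by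
  rcases h₀₁.eq_or_lt with rfl | h₀₁
  · simp
  have hlow : (a₁ - a₀) * p a₁ ≤ partialSum p a₁ - partialSum p a₀ := by
    rw [← partialSum_add_sum_Ioc p h₀₁.le, Nat.add_sub_cancel_left]
    simpa using card_nsmul_le_sum (Ioc a₀ a₁) p (p a₁) fun j hj =>
      hp.antitone (by have := (mem_Ioc.1 hj).1; omega) (mem_Ioc.1 hj).2
  have hup : partialSum p a₂ - partialSum p a₁ ≤ (a₂ - a₁) * p a₁ := by
    rw [← partialSum_add_sum_Ioc p h₁₂, Nat.add_sub_cancel_left]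
    simpa using sum_le_card_nsmul (Ioc a₁ a₂) p (p a₁) fun j hj =>
      hp.antitone (by omega) (mem_Ioc.1 hj).1.le
  calc (partialSum p a₂ - partialSum p a₁) * (a₁ - a₀)
      ≤ (a₂ - a₁) * p a₁ * (a₁ - a₀) := Nat.mul_le_mul_right _ hup
    _ = (a₂ - a₁) * ((a₁ - a₀) * p a₁) := by ring
    _ ≤ (a₂ - a₁) * (partialSum p a₁ - partialSum p a₀) := Nat.mul_le_mul_left _ hlow

lemma chord_le_of_partialSum (hp : IsPartitionOf N p) {a₀ a₁ a₂ t₀ t₁ t₂ : ℕ}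
    (ha₀ : partialSum p a₀ = t₀) (ha₁ : partialSum p a₁ = t₁) (ha₂ : t₂ ≤ partialSum p a₂)
    (h₀₁ : a₀ ≤ a₁) (h₁₂ : a₁ ≤ a₂) :
    (t₂ - t₁) * (a₁ - a₀) ≤ (a₂ - a₁) * (t₁ - t₀) :=
  calc (t₂ - t₁) * (a₁ - a₀) ≤ (partialSum p a₂ - partialSum p a₁) * (a₁ - a₀) :=
        Nat.mul_le_mul_right _ (by omega)
    _ ≤ (a₂ - a₁) * (t₁ - t₀) := ha₀ ▸ ha₁ ▸ hp.partialSum_chord h₀₁ h₁₂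

lemma exists_le_partialSum (hp : IsPartitionOf N p) (hk : k ≤ N) :
    ∃ i, 1 ≤ i ∧ k ≤ partialSum p i :=
  ⟨max 1 N, le_max_left 1 N,
    hk.trans (hp.partialSum_self.ge.trans (partialSum_mono p (le_max_right 1 N)))⟩

lemma one_le_chiOf (hp : IsPartitionOf N p) (hk : k ≤ N) : 1 ≤ chiOf p k :=
  (Nat.sInf_mem (hp.exists_le_partialSum hk)).1

lemma le_partialSum_chiOf (hp : IsPartitionOf N p) (hk : k ≤ N) :
    k ≤ partialSum p (chiOf p k) :=
  (Nat.sInf_mem (hp.exists_le_partialSum hk)).2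

lemma chiOf_le_iff (hp : IsPartitionOf N p) (hk : k ≤ N) (ha : 1 ≤ a) :
    chiOf p k ≤ a ↔ k ≤ partialSum p a :=
  ⟨fun h => (hp.le_partialSum_chiOf hk).trans (partialSum_mono p h), fun h => Nat.sInf_le ⟨ha, h⟩⟩

lemma chiOf_mono (hp : IsPartitionOf N p) (hkl : k ≤ l) (hl : l ≤ N) : chiOf p k ≤ chiOf p l :=
  (hp.chiOf_le_iff (hkl.trans hl) (hp.one_le_chiOf hl)).2 (hkl.trans (hp.le_partialSum_chiOf hl))

lemma chiOf_le_self (hp : IsPartitionOf N p) (hk₁ : 1 ≤ k) (hk : k ≤ N) : chiOf p k ≤ k :=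
  (hp.chiOf_le_iff hk hk₁).2 (hp.le_partialSum hk)

lemma partialSum_pred_chiOf_lt (hp : IsPartitionOf N p) (hk₁ : 1 ≤ k) (hk : k ≤ N) :
    partialSum p (chiOf p k - 1) < k := by
  rcases Nat.eq_zero_or_pos (chiOf p k - 1) with h0 | hpos
  · rw [h0, partialSum_zero]; exact hk₁
  · by_contra! hle
    have := (hp.chiOf_le_iff hk hpos).2 hle
    omega

lemma chiOf_succ_le (hp : IsPartitionOf N p) (hk : k + 1 ≤ N) :
    chiOf p (k + 1) ≤ chiOf p k + 1 := by
  have hc := hp.le_partialSum_chiOf (k := k) (by omega)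
  refine (hp.chiOf_le_iff hk (Nat.le_add_left 1 _)).2 ?_
  rcases Nat.eq_zero_or_pos (p (chiOf p k + 1)) with h0 | hpos
  · rw [hp.partialSum_of_eq_zero (Nat.le_add_left 1 _) h0]; exact hk
  · rw [partialSum_succ]; omega

lemma partialSum_chiOf_of_chiOf_succ (hp : IsPartitionOf N p) (hk : k + 1 ≤ N)
    (h : chiOf p (k + 1) = chiOf p k + 1) : partialSum p (chiOf p k) = k := by
  have hlt := hp.partialSum_pred_chiOf_lt (Nat.le_add_left 1 k) hk
  rw [h, Nat.add_sub_cancel] at hlt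
  have := hp.le_partialSum_chiOf (k := k) (by omega)
  omega

/-- A repeated vanishing order `c` forces `p c ≥ 2`, hence all of `p 1, …, p c` are at least `2`. -/
lemma two_mul_chiOf_le (hp : IsPartitionOf N p) (hk₁ : 1 ≤ k) (hk : k + 1 ≤ N)
    (h : chiOf p (k + 1) = chiOf p k) : 2 * chiOf p k ≤ k + 1 := by
  have hbelow := hp.partialSum_pred_chiOf_lt hk₁ (by omega)
  have habove : k + 1 ≤ partialSum p (chiOf p k) := h ▸ hp.le_partialSum_chiOf hk
  obtain ⟨c, hc⟩ : ∃ c, chiOf p k = c + 1 :=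
    Nat.exists_eq_add_one.2 (hp.one_le_chiOf (k := k) (by omega))
  rw [hc, Nat.add_sub_cancel] at hbelow
  rw [hc, partialSum_succ] at habove
  rw [hc]
  have hmul : c * p (c + 1) ≤ partialSum p c := hp.mul_le_partialSum (Nat.le_succ c)
  have : c * 2 ≤ c * p (c + 1) := Nat.mul_le_mul_left c (by omega)
  omega

end IsPartitionOf

section Fibers

variable (N : ℕ) (f : ℕ → ℕ)

def sublevelCard (i : ℕ) : ℕ := #{k ∈ Icc 1 N | f k ≤ i}

def fiberCard (i : ℕ) : ℕ := #{k ∈ Icc 1 N | f k = i}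

variable {N f} {i k : ℕ}

lemma sum_fiberCard (hf : ∀ k ∈ Icc 1 N, 1 ≤ f k) (i : ℕ) :
    ∑ j ∈ Icc 1 i, fiberCard N f j = sublevelCard N f i := by
  rw [sublevelCard, card_eq_sum_card_fiberwise (f := f) (t := Icc 1 i)]
  · refine sum_congr rfl fun j hj => ?_
    rw [fiberCard, filter_filter]
    exact congrArg card (filter_congr fun x _ => by grind)
  · intro x hx
    simp only [coe_filter, Set.mem_ofPred_eq, coe_Icc, Set.mem_Icc] at hx ⊢
    exact ⟨hf x hx.1, hx.2⟩

lemma sublevelCard_zero (hf : ∀ k ∈ Icc 1 N, 1 ≤ f k) : sublevelCard N f 0 = 0 := by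
  simp [← sum_fiberCard hf]

lemma sublevelCard_succ (hf : ∀ k ∈ Icc 1 N, 1 ≤ f k) (i : ℕ) :
    sublevelCard N f (i + 1) = sublevelCard N f i + fiberCard N f (i + 1) := by
  rw [← sum_fiberCard hf, ← sum_fiberCard hf, sum_Icc_succ_top (Nat.le_add_left 1 i)]

lemma sublevelCard_le (i : ℕ) : sublevelCard N f i ≤ N :=
  (card_filter_le _ _).trans (by simp)

lemma le_sublevelCard_iff (hf : MonotoneOn f (Icc 1 N)) (hk : k ∈ Icc 1 N) :
    k ≤ sublevelCard N f i ↔ f k ≤ i := by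
  obtain ⟨hk₁, hkN⟩ := mem_Icc.1 hk
  constructor
  · intro hle
    by_contra! hlt
    have hsub : {x ∈ Icc 1 N | f x ≤ i} ⊆ Icc 1 (k - 1) := fun x hx => by
      obtain ⟨hxN, hfx⟩ := mem_filter.1 hx
      have := mt (hf hk hxN) (by omega)
      rw [mem_Icc] at hxN ⊢
      omega
    have := card_le_card hsub
    rw [Nat.card_Icc] at this
    unfold sublevelCard at hle
    omega
  · intro hfk
    have hsub : Icc 1 k ⊆ {x ∈ Icc 1 N | f x ≤ i} := fun x hx => by
      obtain ⟨hx₁, hxk⟩ := mem_Icc.1 hx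
      have hxN : x ∈ Icc 1 N := mem_Icc.2 ⟨hx₁, hxk.trans hkN⟩
      exact mem_filter.2 ⟨hxN, (hf hxN hk hxk).trans hfk⟩
    simpa [sublevelCard] using card_le_card hsub

lemma chiOf_fiberCard (hf₁ : ∀ k ∈ Icc 1 N, 1 ≤ f k) (hf : MonotoneOn f (Icc 1 N))
    (hk : k ∈ Icc 1 N) : chiOf (fiberCard N f) k = f k := by
  have hset : {i | 1 ≤ i ∧ k ≤ ∑ j ∈ Icc 1 i, fiberCard N f j} = Set.Ici (f k) := by
    ext i
    simp only [Set.mem_ofPred_eq, Set.mem_Ici, sum_fiberCard hf₁, le_sublevelCard_iff hf hk]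
    exact ⟨And.right, fun h => ⟨(hf₁ k hk).trans h, h⟩⟩
  rw [chiOf, hset, csInf_Ici]

lemma isPartitionOf_fiberCard (hf₁ : ∀ k ∈ Icc 1 N, 1 ≤ f k) (hf : ∀ k ∈ Icc 1 N, f k ≤ k)
    (hanti : ∀ i, 1 ≤ i → fiberCard N f (i + 1) ≤ fiberCard N f i) :
    IsPartitionOf N (fiberCard N f) := by
  refine ⟨hanti, ?_, fun i hi => card_eq_zero.2 (filter_eq_empty_iff.2 fun k hk => ?_)⟩
  · rw [sum_fiberCard hf₁, sublevelCard,
      filter_true_of_mem fun k hk => (hf k hk).trans (mem_Icc.1 hk).2]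
    simp
  · have := hf k hk
    have := (mem_Icc.1 hk).2
    omega

lemma apply_sublevelCard (hf : MonotoneOn f (Icc 1 N))
    (hstep : ∀ k, 1 ≤ k → k + 1 ≤ N → f (k + 1) ≤ f k + 1)
    (h₁ : 1 ≤ sublevelCard N f i) (hN : sublevelCard N f i < N) :
    f (sublevelCard N f i) = i ∧ f (sublevelCard N f i + 1) = i + 1 := by
  have hle := (le_sublevelCard_iff hf (mem_Icc.2 ⟨h₁, hN.le⟩)).1 le_rfl
  have hgt := (le_sublevelCard_iff hf (i := i) (mem_Icc.2 ⟨Nat.le_add_left 1 _, hN⟩)).not.1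
    (by omega)
  have := hstep _ h₁ hN
  omega

lemma apply_sublevelCard_of_lt (hf : MonotoneOn f (Icc 1 N))
    (h : sublevelCard N f i < sublevelCard N f (i + 1)) :
    f (sublevelCard N f (i + 1)) = i + 1 := by
  have hmem : sublevelCard N f (i + 1) ∈ Icc 1 N := mem_Icc.2 ⟨by omega, sublevelCard_le _⟩
  have := (le_sublevelCard_iff hf hmem).1 le_rfl
  have := (le_sublevelCard_iff (i := i) hf hmem).not.1 (by omega)
  omega

end Fibers

lemma le_of_mul_le_mul_of_add_eq {D₁ D₂ α₁ α₂ β₁ β₂ : ℕ} (h₁ : D₂ * α₁ ≤ β₁ * D₁)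
    (h₂ : D₂ * α₂ ≤ β₂ * D₁) (hα : α₁ + α₂ = D₁ + 1) (hβ : β₁ + β₂ = D₂ + 1) : D₂ ≤ D₁ := by
  have : D₂ * (D₁ + 1) ≤ (D₂ + 1) * D₁ := by
    rw [← hα, ← hβ, Nat.mul_add, Nat.add_mul]
    exact Nat.add_le_add h₁ h₂
  nlinarith

/-- Truncated subtraction is harmless here because of the `max 1`. -/
noncomputable def nodal (p₁ p₂ : ℕ → ℕ) (k : ℕ) : ℕ := max 1 (chiOf p₁ k + chiOf p₂ k - k)

section Nodal

variable {N : ℕ} {p₁ p₂ : ℕ → ℕ} {i k : ℕ}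

local notation "T" => sublevelCard N (nodal p₁ p₂)

lemma one_le_nodal (p₁ p₂ : ℕ → ℕ) (k : ℕ) : 1 ≤ nodal p₁ p₂ k := le_max_left _ _

lemma nodal_le_self (h₁ : IsPartitionOf N p₁) (h₂ : IsPartitionOf N p₂) (hk₁ : 1 ≤ k)
    (hk : k ≤ N) : nodal p₁ p₂ k ≤ k := by
  have := h₁.chiOf_le_self hk₁ hk
  have := h₂.chiOf_le_self hk₁ hk
  unfold nodal
  omega

lemma nodal_one (h₁ : IsPartitionOf N p₁) (h₂ : IsPartitionOf N p₂) (hN : 1 ≤ N) :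
    nodal p₁ p₂ 1 = 1 :=
  (nodal_le_self h₁ h₂ le_rfl hN).antisymm (one_le_nodal p₁ p₂ 1)

lemma nodal_succ_le (h₁ : IsPartitionOf N p₁) (h₂ : IsPartitionOf N p₂) (hk : k + 1 ≤ N) :
    nodal p₁ p₂ (k + 1) ≤ nodal p₁ p₂ k + 1 := by
  have := h₁.chiOf_succ_le hk
  have := h₂.chiOf_succ_le hk
  unfold nodal
  omega

/-- If neither vanishing order grows at `k`, their sum is at most `k + 1`, so `nodal` is `1` at
`k`. -/
lemma nodal_le_nodal_succ (h₁ : IsPartitionOf N p₁) (h₂ : IsPartitionOf N p₂) (hk₁ : 1 ≤ k)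
    (hk : k + 1 ≤ N) : nodal p₁ p₂ k ≤ nodal p₁ p₂ (k + 1) := by
  have hmono₁ := h₁.chiOf_mono (Nat.le_add_right k 1) hk
  have hmono₂ := h₂.chiOf_mono (Nat.le_add_right k 1) hk
  unfold nodal
  by_cases heq : chiOf p₁ (k + 1) = chiOf p₁ k ∧ chiOf p₂ (k + 1) = chiOf p₂ k
  · have := h₁.two_mul_chiOf_le hk₁ hk heq.1
    have := h₂.two_mul_chiOf_le hk₁ hk heq.2
    omega
  · omega

lemma nodal_monotoneOn (h₁ : IsPartitionOf N p₁) (h₂ : IsPartitionOf N p₂) :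
    MonotoneOn (nodal p₁ p₂) (Icc 1 N) := by
  rw [coe_Icc]
  exact monotoneOn_of_le_add_one Set.ordConnected_Icc fun k _ hk hk' =>
    nodal_le_nodal_succ h₁ h₂ hk.1 hk'.2

lemma nodal_jump (h₁ : IsPartitionOf N p₁) (h₂ : IsPartitionOf N p₂) (hk : k + 1 ≤ N)
    (h : nodal p₁ p₂ (k + 1) = nodal p₁ p₂ k + 1) :
    partialSum p₁ (chiOf p₁ k) = k ∧ partialSum p₂ (chiOf p₂ k) = k ∧
      chiOf p₁ k + chiOf p₂ k = k + nodal p₁ p₂ k := by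
  have hstep₁ := h₁.chiOf_succ_le hk
  have hstep₂ := h₂.chiOf_succ_le hk
  unfold nodal at h ⊢
  have hjump₁ : chiOf p₁ (k + 1) = chiOf p₁ k + 1 := by omega
  have hjump₂ : chiOf p₂ (k + 1) = chiOf p₂ k + 1 := by omega
  exact ⟨h₁.partialSum_chiOf_of_chiOf_succ hk hjump₁, h₂.partialSum_chiOf_of_chiOf_succ hk hjump₂,
    by omega⟩

lemma nodal_sublevelCard (h₁ : IsPartitionOf N p₁) (h₂ : IsPartitionOf N p₂) (hi : 1 ≤ i)
    (hlt : T i < N) : 1 ≤ T i ∧ nodal p₁ p₂ (T i) = i ∧ nodal p₁ p₂ (T i + 1) = i + 1 := by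
  have hpos : 1 ≤ T i :=
    (le_sublevelCard_iff (nodal_monotoneOn h₁ h₂) (mem_Icc.2 ⟨le_rfl, by omega⟩)).2
      ((nodal_one h₁ h₂ (by omega)).trans_le hi)
  exact ⟨hpos, apply_sublevelCard (nodal_monotoneOn h₁ h₂)
    (fun _ _ hk => nodal_succ_le h₁ h₂ hk) hpos hlt⟩

lemma chiOf_add_chiOf_of_two_le_nodal (h : 2 ≤ nodal p₁ p₂ k) :
    chiOf p₁ k + chiOf p₂ k = k + nodal p₁ p₂ k := by
  unfold nodal at h ⊢
  omega

lemma exists_partialSum_eq_sublevelCard (h₁ : IsPartitionOf N p₁) (h₂ : IsPartitionOf N p₂)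
    (i : ℕ) (hlt : T i < N) :
    ∃ a b, partialSum p₁ a = T i ∧ partialSum p₂ b = T i ∧ a + b = T i + i := by
  rcases Nat.eq_zero_or_pos i with rfl | hi
  · refine ⟨0, 0, ?_⟩
    simp [sublevelCard_zero fun k _ => one_le_nodal p₁ p₂ k]
  obtain ⟨-, hleft, hright⟩ := nodal_sublevelCard h₁ h₂ hi hlt
  obtain ⟨hS₁, hS₂, hsum⟩ := nodal_jump h₁ h₂ hlt (by rw [hleft, hright])
  exact ⟨_, _, hS₁, hS₂, hsum.trans (by rw [hleft])⟩

lemma fiberCard_nodal_succ_le (h₁ : IsPartitionOf N p₁) (h₂ : IsPartitionOf N p₂) (i : ℕ) :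
    fiberCard N (nodal p₁ p₂) (i + 2) ≤ fiberCard N (nodal p₁ p₂) (i + 1) := by
  have hmono := nodal_monotoneOn h₁ h₂
  have hf₁ : ∀ k ∈ Icc 1 N, 1 ≤ nodal p₁ p₂ k := fun k _ => one_le_nodal p₁ p₂ k
  have hT₁ := sublevelCard_succ hf₁ i
  have hT₂ : T (i + 2) = T (i + 1) + fiberCard N (nodal p₁ p₂) (i + 2) :=
    sublevelCard_succ hf₁ (i + 1)
  have hT₂N : T (i + 2) ≤ N := sublevelCard_le (i + 2)
  rcases Nat.eq_zero_or_pos (fiberCard N (nodal p₁ p₂) (i + 2)) with h0 | hpos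
  · omega
  have hT₁₂ : T (i + 1) < T (i + 2) := by omega
  have hT₀₁ : T i < T (i + 1) := by
    obtain ⟨ht₁, hlevel₁, -⟩ := nodal_sublevelCard h₁ h₂ (Nat.le_add_left 1 i) (by omega)
    exact not_le.1 ((le_sublevelCard_iff hmono (mem_Icc.2 ⟨ht₁, by omega⟩)).not.2 (by omega))
  obtain ⟨a₀, b₀, ha₀, hb₀, hab₀⟩ := exists_partialSum_eq_sublevelCard h₁ h₂ i (by omega)
  obtain ⟨a₁, b₁, ha₁, hb₁, hab₁⟩ := exists_partialSum_eq_sublevelCard h₁ h₂ (i + 1) (by omega)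
  have ha₂ := h₁.le_partialSum_chiOf hT₂N
  have hb₂ := h₂.le_partialSum_chiOf hT₂N
  have hlevel₂ : nodal p₁ p₂ (T (i + 2)) = i + 2 :=
    apply_sublevelCard_of_lt hmono hT₁₂
  have hab₂ := chiOf_add_chiOf_of_two_le_nodal (hlevel₂ ▸ le_add_self)
  have ha₀₁ := (partialSum_mono p₁).reflect_lt (ha₀ ▸ ha₁ ▸ hT₀₁)
  have hb₀₁ := (partialSum_mono p₂).reflect_lt (hb₀ ▸ hb₁ ▸ hT₀₁)
  have ha₁₂ := (partialSum_mono p₁).reflect_lt (ha₁ ▸ hT₁₂.trans_le ha₂)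
  have hb₁₂ := (partialSum_mono p₂).reflect_lt (hb₁ ▸ hT₁₂.trans_le hb₂)
  rw [show fiberCard N (nodal p₁ p₂) (i + 1) = T (i + 1) - T i by omega,
    show fiberCard N (nodal p₁ p₂) (i + 2) = T (i + 2) - T (i + 1) by omega]
  exact le_of_mul_le_mul_of_add_eq (h₁.chord_le_of_partialSum ha₀ ha₁ ha₂ ha₀₁.le ha₁₂.le)
    (h₂.chord_le_of_partialSum hb₀ hb₁ hb₂ hb₀₁.le hb₁₂.le) (by omega) (by omega)

end Nodal

theorem nodal_sequence_is_vanishing_order_two_general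
    (N : ℕ) (p₁ p₂ χ₁ χ₂ : ℕ → ℕ)
    (h1 : IsVanishingOrderSeq N p₁ χ₁)
    (h2 : IsVanishingOrderSeq N p₂ χ₂) :
    ∃ q : ℕ → ℕ, IsPartitionOf N q ∧
      ∀ k, 1 ≤ k → k ≤ N →
        (chiOf q k : ℤ) = max 1 ((χ₁ k : ℤ) + (χ₂ k : ℤ) - (k : ℤ)) := by
  obtain ⟨hp₁, hχ₁⟩ := h1
  obtain ⟨hp₂, hχ₂⟩ := h2
  have hf₁ : ∀ k ∈ Icc 1 N, 1 ≤ nodal p₁ p₂ k := fun k _ => one_le_nodal p₁ p₂ k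
  refine ⟨fiberCard N (nodal p₁ p₂), isPartitionOf_fiberCard hf₁
    (fun k hk => nodal_le_self hp₁ hp₂ (mem_Icc.1 hk).1 (mem_Icc.1 hk).2) ?_, fun k hk₁ hk => ?_⟩
  · intro i hi
    obtain ⟨j, rfl⟩ := Nat.exists_eq_add_of_le' hi
    exact fiberCard_nodal_succ_le hp₁ hp₂ j
  · rw [chiOf_fiberCard hf₁ (nodal_monotoneOn hp₁ hp₂) (mem_Icc.2 ⟨hk₁, hk⟩), nodal,
      hχ₁ k hk₁ hk, hχ₂ k hk₁ hk]
    omega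

/-- for two nonzero partitions of `N`, the nodal sequence
`max(1, χ¹_k + χ²_k − k)` is the vanishing-order sequence of some partition of `N`. -/
theorem nodal_sequence_is_vanishing_order_two
    (N : ℕ) (hN : 2 ≤ N) (p₁ p₂ χ₁ χ₂ : ℕ → ℕ)
    (h1 : IsVanishingOrderSeq N p₁ χ₁) (hp1 : 2 ≤ p₁ 1)
    (h2 : IsVanishingOrderSeq N p₂ χ₂) (hp2 : 2 ≤ p₂ 1) :
    ∃ q : ℕ → ℕ, IsPartitionOf N q ∧
      ∀ k, 1 ≤ k → k ≤ N →
        (chiOf q k : ℤ) = max 1 ((χ₁ k : ℤ) + (χ₂ k : ℤ) - (k : ℤ)) :=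
  nodal_sequence_is_vanishing_order_two_general N p₁ p₂ χ₁ χ₂ h1 h2
end

section
/- Let N ≥ 2 and let χ¹, χ² be the vanishing-order sequences of two nonzero partitions of N. Define b : {2,…,N} → {0,1} by b_k = 1 if and only if χ¹_k + χ²_k ≤ k. Then b is of initial-segment type or of alternating type. -/
/-!
Write `S a = p 1 + ⋯ + p a`. Since `χ k ≤ a ↔ k ≤ S a`, the condition `χ¹_k + χ²_k ≤ k` says
that `k` splits as `a + b` with `k ≤ S¹ a` and `k ≤ S² b`. Because the parts are nonincreasing,
`S a ≥ n * a` as soon as the `a`-th part is at least `n`; this lets one shorten a split of `k + 2`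
to a split of `k`, and, when some first part is at least `3` (which is exactly when `3` splits),
a split of `k + 1` to a split of `k`. The set of `k` that split therefore contains `2` and is
closed downwards under `k ↦ k - 2`, and also under `k ↦ k - 1` if it contains `3`.
-/

namespace VanishingOrder

open Finset

def prefixSum (p : ℕ → ℕ) (a : ℕ) : ℕ := ∑ j ∈ Icc 1 a, p j

variable {p q : ℕ → ℕ} {a b c k m n : ℕ}

theorem prefixSum_succ (a : ℕ) : prefixSum p (a + 1) = prefixSum p a + p (a + 1) :=
  sum_Icc_succ_top (by omega) p

@[simp] theorem prefixSum_one : prefixSum p 1 = p 1 := by simp [prefixSum]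

theorem prefixSum_sub_one_add (ha : 1 ≤ a) : prefixSum p (a - 1) + p a = prefixSum p a := by
  obtain ⟨a, rfl⟩ : ∃ a', a = a' + 1 := ⟨a - 1, by omega⟩
  simp [prefixSum_succ]

theorem prefixSum_mono : Monotone (prefixSum p) := fun _ _ h =>
  sum_le_sum_of_subset (Icc_subset_Icc_right h)

theorem IsPartitionOf.antitoneOn {N : ℕ} (hp : IsPartitionOf N p) : AntitoneOn p (Set.Ici 1) :=
  antitoneOn_nat_Ici_of_succ_le hp.1

theorem mul_le_prefixSum (hp : AntitoneOn p (Set.Ici 1)) (hma : m ≤ a) (hn : n ≤ p a) :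
    n * m ≤ prefixSum p m := by
  have := card_nsmul_le_sum (Icc 1 m) p n fun j hj => by
    simp only [mem_Icc] at hj
    exact hn.trans (hp (Set.mem_Ici.2 hj.1) (Set.mem_Ici.2 (by omega)) (by omega))
  simpa [mul_comm, prefixSum] using this

theorem add_mul_le_prefixSum (hp : AntitoneOn p (Set.Ici 1)) (hm : 1 ≤ m) (hma : m ≤ a)
    (hn : n ≤ p a) : p 1 + n * (m - 1) ≤ prefixSum p m := by
  induction m, hm using Nat.le_induction with
  | base => simp
  | succ m hm ih =>
    have hpm : n ≤ p (m + 1) :=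
      hn.trans (hp (Set.mem_Ici.2 (by omega)) (Set.mem_Ici.2 (by omega)) hma)
    have hnm : n * m = n * (m - 1) + n := by rw [← Nat.mul_succ]; congr; omega
    rw [prefixSum_succ, Nat.add_sub_cancel]
    have := ih (by omega)
    omega

/- If dropping the `a`-th part brings the sum below `c`, that part, and hence every earlier one,
exceeds `n`. -/
theorem le_prefixSum_sub_one (hp : AntitoneOn p (Set.Ici 1)) (ha : 1 ≤ a)
    (h : c + n ≤ prefixSum p a) (hc : c ≤ (n + 1) * (a - 1)) : c ≤ prefixSum p (a - 1) := by
  by_contra! hlt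
  have := prefixSum_sub_one_add (p := p) ha
  have := mul_le_prefixSum hp (Nat.sub_le a 1) (show n + 1 ≤ p a by omega)
  omega

theorem le_prefixSum_sub_one_of_le_first_add (hp : AntitoneOn p (Set.Ici 1)) (ha : 2 ≤ a)
    (h : c + n ≤ prefixSum p a) (hc : c ≤ p 1 + (n + 1) * (a - 2)) :
    c ≤ prefixSum p (a - 1) := by
  by_contra! hlt
  have := prefixSum_sub_one_add (p := p) (a := a) (by omega)
  have := add_mul_le_prefixSum hp (by omega) (Nat.sub_le a 1) (show n + 1 ≤ p a by omega)
  rw [show a - 1 - 1 = a - 2 by omega] at this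
  omega

theorem le_prefixSum_sub_two (hp : AntitoneOn p (Set.Ici 1)) (ha : 2 ≤ a)
    (h : c + 2 ≤ prefixSum p a) (hc : c + 4 ≤ 2 * a) : c ≤ prefixSum p (a - 2) := by
  obtain ⟨a, rfl⟩ : ∃ a', a = a' + 2 := ⟨a - 2, by omega⟩
  by_contra! hlt
  have h₁ := prefixSum_succ (p := p) a
  have h₂ : prefixSum p (a + 2) = prefixSum p (a + 1) + p (a + 2) := prefixSum_succ (a + 1)
  simp only [Nat.add_sub_cancel] at hlt
  have hmono : p (a + 2) ≤ p (a + 1) := hp (Set.mem_Ici.2 (by omega)) (Set.mem_Ici.2 (by omega))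
    (by omega)
  have := mul_le_prefixSum hp (Nat.le_succ a) (show 2 ≤ p (a + 1) by omega)
  omega

theorem one_le_chiOf_and_le_prefixSum {N : ℕ} (hp : IsPartitionOf N p) (hk : k ≤ N) :
    1 ≤ chiOf p k ∧ k ≤ prefixSum p (chiOf p k) := by
  have hNk : k ≤ prefixSum p (N + 1) := hk.trans (hp.2.1.ge.trans (prefixSum_mono N.le_succ))
  exact Nat.sInf_mem (s := {i | 1 ≤ i ∧ k ≤ prefixSum p i}) ⟨N + 1, N.succ_pos, hNk⟩

theorem chiOf_le (ha : 1 ≤ a) (h : k ≤ prefixSum p a) : chiOf p k ≤ a :=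
  Nat.sInf_le ⟨ha, h⟩

def HasSplit (p q : ℕ → ℕ) (k : ℕ) : Prop :=
  ∃ a b, 1 ≤ a ∧ 1 ≤ b ∧ a + b = k ∧ k ≤ prefixSum p a ∧ k ≤ prefixSum q b

theorem chiOf_add_chiOf_le_iff {N : ℕ} (hp : IsPartitionOf N p) (hq : IsPartitionOf N q)
    (hk : k ≤ N) : chiOf p k + chiOf q k ≤ k ↔ HasSplit p q k := by
  obtain ⟨hp₁, hpk⟩ := one_le_chiOf_and_le_prefixSum hp hk
  obtain ⟨hq₁, hqk⟩ := one_le_chiOf_and_le_prefixSum hq hk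
  constructor
  · intro h
    exact ⟨chiOf p k, k - chiOf p k, hp₁, by omega, by omega, hpk,
      hqk.trans (prefixSum_mono (by omega))⟩
  · rintro ⟨a, b, ha, hb, rfl, hSa, hSb⟩
    have := chiOf_le ha hSa
    have := chiOf_le hb hSb
    omega

theorem hasSplit_two (hp : 2 ≤ p 1) (hq : 2 ≤ q 1) : HasSplit p q 2 :=
  ⟨1, 1, le_rfl, le_rfl, rfl, by simpa using hp, by simpa using hq⟩

theorem HasSplit.three_le (h : HasSplit p q 3) : 3 ≤ p 1 ∨ 3 ≤ q 1 := by
  obtain ⟨a, b, ha, hb, hab, hSa, hSb⟩ := h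
  rcases (show a = 1 ∨ b = 1 by omega) with rfl | rfl
  · exact .inl (by simpa using hSa)
  · exact .inr (by simpa using hSb)

theorem HasSplit.of_add_two (hp : AntitoneOn p (Set.Ici 1)) (hq : AntitoneOn q (Set.Ici 1))
    (hk : 2 ≤ k) (h : HasSplit p q (k + 2)) : HasSplit p q k := by
  obtain ⟨a, b, ha, hb, hab, hSa, hSb⟩ := h
  by_cases hb4 : k + 4 ≤ 2 * b
  · exact ⟨a, b - 2, ha, by omega, by omega, by omega, le_prefixSum_sub_two hq (by omega) hSb hb4⟩
  by_cases ha4 : k + 4 ≤ 2 * a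
  · exact ⟨a - 2, b, by omega, hb, by omega, le_prefixSum_sub_two hp (by omega) hSa ha4, by omega⟩
  exact ⟨a - 1, b - 1, by omega, by omega, by omega,
    le_prefixSum_sub_one hp ha hSa (by omega), le_prefixSum_sub_one hq hb hSb (by omega)⟩

theorem HasSplit.of_succ (hp : AntitoneOn p (Set.Ici 1)) (hq : AntitoneOn q (Set.Ici 1))
    (h₃ : 3 ≤ p 1 ∨ 3 ≤ q 1) (hk : 2 ≤ k) (h : HasSplit p q (k + 1)) : HasSplit p q k := by
  obtain ⟨a, b, ha, hb, hab, hSa, hSb⟩ := h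
  by_cases hb2 : k ≤ 2 * (b - 1)
  · exact ⟨a, b - 1, ha, by omega, by omega, by omega, le_prefixSum_sub_one hq hb hSb hb2⟩
  by_cases ha2 : k ≤ 2 * (a - 1)
  · exact ⟨a - 1, b, by omega, hb, by omega, le_prefixSum_sub_one hp ha hSa ha2, by omega⟩
  rcases h₃ with h₃ | h₃
  · exact ⟨a - 1, b, by omega, hb, by omega,
      le_prefixSum_sub_one_of_le_first_add hp (by omega) hSa (by omega), by omega⟩
  · exact ⟨a, b - 1, ha, by omega, by omega, by omega,
      le_prefixSum_sub_one_of_le_first_add hq (by omega) hSb (by omega)⟩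

theorem of_add_mul_of_step {P : ℕ → Prop} {c s : ℕ} (hstep : ∀ k, c ≤ k → P (k + s) → P k)
    {k : ℕ} (hk : c ≤ k) (d : ℕ) (h : P (k + s * d)) : P k := by
  induction d generalizing k with
  | zero => simpa using h
  | succ d ih =>
    refine hstep k hk (ih (by omega) ?_)
    rwa [Nat.mul_succ, ← add_assoc, add_right_comm] at h

theorem initialSegment_or_alternating (P : ℕ → Prop) {N : ℕ} (hN : 2 ≤ N) (h2 : P 2)
    (hstep2 : ∀ k, 2 ≤ k → P (k + 2) → P k) (hstep1 : P 3 → ∀ k, 2 ≤ k → P (k + 1) → P k) :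
    (∃ l, 2 ≤ l ∧ ∀ k, 2 ≤ k → k ≤ N → (P k ↔ k ≤ l)) ∨
    (∃ l, 2 ≤ l ∧ ∀ k, 2 ≤ k → k ≤ N → (P k ↔ Even k ∧ k ≤ l)) := by
  classical
  set l := Nat.findGreatest P N
  have hl : 2 ≤ l := Nat.le_findGreatest hN h2
  have hPl : P l := Nat.findGreatest_spec hN h2
  have hle : ∀ k ≤ N, P k → k ≤ l := fun k hk hP => Nat.le_findGreatest hk hP
  by_cases h3 : P 3
  · refine .inl ⟨l, hl, fun k hk hkN => ⟨hle k hkN, fun hkl => ?_⟩⟩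
    exact of_add_mul_of_step (hstep1 h3) hk (l - k) (by rwa [one_mul, Nat.add_sub_cancel' hkl])
  · have heven : ∀ k, 2 ≤ k → P k → Even k := by
      intro k hk hP
      by_contra hodd
      obtain ⟨j, rfl⟩ := Nat.not_even_iff_odd.mp hodd
      exact h3 (of_add_mul_of_step hstep2 (by norm_num) (j - 1)
        (by rwa [show 3 + 2 * (j - 1) = 2 * j + 1 by omega]))
    refine .inr ⟨l, hl, fun k hk hkN => ⟨fun hP => ⟨heven k hk hP, hle k hkN hP⟩, ?_⟩⟩
    rintro ⟨⟨i, rfl⟩, hkl⟩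
    obtain ⟨j, hj⟩ := heven l hl hPl
    exact of_add_mul_of_step hstep2 hk (j - i) (by rwa [show i + i + 2 * (j - i) = l by omega])

end VanishingOrder

open VanishingOrder

/-- the center-parameter indicator `b_k = 1 ⇔ χ¹_k + χ²_k ≤ k` on
`{2,…,N}` is of initial-segment type or of alternating type. -/
theorem center_indicator_two_punctures_type
    (N : ℕ) (hN : 2 ≤ N) (p₁ p₂ χ₁ χ₂ : ℕ → ℕ)
    (h1 : IsVanishingOrderSeq N p₁ χ₁) (hp1 : 2 ≤ p₁ 1)
    (h2 : IsVanishingOrderSeq N p₂ χ₂) (hp2 : 2 ≤ p₂ 1) :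
    (∃ l, 2 ≤ l ∧ ∀ k, 2 ≤ k → k ≤ N → (χ₁ k + χ₂ k ≤ k ↔ k ≤ l)) ∨
    (∃ l, 2 ≤ l ∧ ∀ k, 2 ≤ k → k ≤ N → (χ₁ k + χ₂ k ≤ k ↔ Even k ∧ k ≤ l)) := by
  obtain ⟨hP₁, hχ₁⟩ := h1
  obtain ⟨hP₂, hχ₂⟩ := h2
  have hχ : ∀ k, 2 ≤ k → k ≤ N → (χ₁ k + χ₂ k ≤ k ↔ HasSplit p₁ p₂ k) := fun k hk hkN => by
    rw [hχ₁ k (by omega) hkN, hχ₂ k (by omega) hkN]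
    exact chiOf_add_chiOf_le_iff hP₁ hP₂ hkN
  rcases initialSegment_or_alternating (HasSplit p₁ p₂) hN (hasSplit_two hp1 hp2)
      (fun _ hk => HasSplit.of_add_two hP₁.antitoneOn hP₂.antitoneOn hk)
      (fun h₃ _ hk => HasSplit.of_succ hP₁.antitoneOn hP₂.antitoneOn h₃.three_le hk) with
    ⟨l, hl, h⟩ | ⟨l, hl, h⟩
  · exact .inl ⟨l, hl, fun k hk hkN => (hχ k hk hkN).trans (h k hk hkN)⟩
  · exact .inr ⟨l, hl, fun k hk hkN => (hχ k hk hkN).trans (h k hk hkN)⟩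
end

section
/- Let k ≥ 1 be an integer and define a ∘ b := 1 + max(0, a + b − k − 1) for integers a, b. Then for every nonempty list x₁, x₂, …, x_m of integers with 1 ≤ x_j ≤ k for all j, the left-iterated product satisfies ((x₁ ∘ x₂) ∘ ⋯) ∘ x_m = 1 + max(0, x₁ + x₂ + ⋯ + x_m − (m−1)k − 1). -/
/-- The fusion operation on pole orders: `a ∘ b := 1 + max(0, a + b − k − 1)`. -/
def nodeOp (k a b : ℤ) : ℤ := 1 + max 0 (a + b - k - 1)

/-- Since `y - k ≤ 0`, the inner `max` is absorbed by the outer one. -/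
theorem nodeOp_one_add_max {k y : ℤ} (hy : y ≤ k) (t : ℤ) :
    nodeOp k (1 + max 0 t) y = 1 + max 0 (t + y - k) := by
  unfold nodeOp
  omega

theorem foldl_nodeOp_one_add_max {k : ℤ} {xs : List ℤ} (hxs : ∀ y ∈ xs, y ≤ k) (t : ℤ) :
    xs.foldl (nodeOp k) (1 + max 0 t) = 1 + max 0 (t + xs.sum - xs.length * k) := by
  induction xs generalizing t with
  | nil => simp
  | cons y ys ih =>
    rw [List.foldl_cons, nodeOp_one_add_max (hxs y List.mem_cons_self),
      ih (fun z hz => hxs z (List.mem_cons_of_mem y hz))]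
    simp only [List.sum_cons, List.length_cons]
    push_cast
    ring_nf

theorem nodeOp_foldl_eq_general
    (k : ℤ) (x : ℤ) (xs : List ℤ)
    (hmem : ∀ y ∈ x :: xs, 1 ≤ y ∧ y ≤ k) :
    xs.foldl (nodeOp k) x =
      1 + max 0 ((x :: xs).sum - (((x :: xs).length : ℤ) - 1) * k - 1) := by
  have hx : x = 1 + max 0 (x - 1) := by
    have := (hmem x List.mem_cons_self).1
    omega
  conv_lhs => rw [hx]
  rw [foldl_nodeOp_one_add_max (fun y hy => (hmem y (List.mem_cons_of_mem x hy)).2)]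
  simp only [List.sum_cons, List.length_cons]
  push_cast
  ring_nf

/-- for a nonempty list `x₁, …, x_m` with `1 ≤ xⱼ ≤ k`, the left-iterated
product satisfies `((x₁ ∘ x₂) ∘ ⋯) ∘ x_m = 1 + max(0, x₁ + ⋯ + x_m − (m−1)k − 1)`. -/
theorem nodeOp_foldl_eq
    (k : ℤ) (hk : 1 ≤ k) (x : ℤ) (xs : List ℤ)
    (hmem : ∀ y ∈ x :: xs, 1 ≤ y ∧ y ≤ k) :
    xs.foldl (nodeOp k) x =
      1 + max 0 ((x :: xs).sum - (((x :: xs).length : ℤ) - 1) * k - 1) :=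
  nodeOp_foldl_eq_general k x xs hmem
end

section
/- Let p ≥ 1 and k = 2p. Suppose m : ℤ → ℕ is a finitely supported function such that for every integer l, 2·∑_{i∈ℤ} m_i · max(0, i − l + 1) equals: k² + (3−4l)k + 6(l−1) if l ≤ 0; (k−2l+2)(k−2l+1) if 0 < 2l ≤ k; and 0 if 2l > k. Then m_p = 1, m_i = 4 for all 1 ≤ i ≤ p−1, and m_i = 0 for all other i ∈ ℤ. -/
/-!
The function `l ↦ max 0 (i - l + 1)` is a ramp with a single kink at `l = i`, so its second
difference in `l` is the indicator of `i`. Hence the second difference of the left-hand side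
recovers `2 * m l`, and the second difference of the prescribed right-hand side is computed
directly: it vanishes on the linear piece `l ≤ 0`, equals `8` on the quadratic piece and `2` at
its endpoint `l = p`.
-/

/-- The dimension of `H⁰(ℙ¹, ⊕ᵢ mᵢ 𝒪(i − l))`. -/
def rampSum (m : ℤ →₀ ℕ) (l : ℤ) : ℤ :=
  ∑ i ∈ m.support, (m i : ℤ) * max 0 (i - l + 1)

/-- The prescribed value of `2 * rampSum m l` for `k = 2p`. -/
def evenRampSum (p : ℕ) (l : ℤ) : ℤ :=
  if l ≤ 0 then
    ((2 * p : ℤ)) ^ 2 + (3 - 4 * l) * (2 * p : ℤ) + 6 * (l - 1)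
  else if 2 * l ≤ (2 * p : ℤ) then
    ((2 * p : ℤ) - 2 * l + 2) * ((2 * p : ℤ) - 2 * l + 1)
  else 0

def evenMultiplicity (p : ℕ) (i : ℤ) : ℤ :=
  if i = p then 1 else if 1 ≤ i ∧ i ≤ (p : ℤ) - 1 then 4 else 0

lemma ramp_sub_two_mul_add (i l : ℤ) :
    max 0 (i - l + 1) - 2 * max 0 (i - (l + 1) + 1) + max 0 (i - (l + 2) + 1) =
      if i = l then 1 else 0 := by
  split_ifs <;> omega

lemma rampSum_sub_two_mul_add (m : ℤ →₀ ℕ) (l : ℤ) :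
    rampSum m l - 2 * rampSum m (l + 1) + rampSum m (l + 2) = m l := by
  have hterm (i : ℤ) :
      (m i : ℤ) * max 0 (i - l + 1) - 2 * ((m i : ℤ) * max 0 (i - (l + 1) + 1))
        + (m i : ℤ) * max 0 (i - (l + 2) + 1) = if i = l then (m i : ℤ) else 0 := by
    have hramp := ramp_sub_two_mul_add i l
    split_ifs at hramp ⊢ <;> linear_combination (m i : ℤ) * hramp
  simp only [rampSum, Finset.mul_sum, ← Finset.sum_sub_distrib, ← Finset.sum_add_distrib, hterm,
    Finset.sum_ite_eq', Finsupp.mem_support_iff]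
  split_ifs with h
  · rfl
  · simp [not_not.mp h]

lemma evenRampSum_sub_two_mul_add {p : ℕ} (hp : 1 ≤ p) (l : ℤ) :
    evenRampSum p l - 2 * evenRampSum p (l + 1) + evenRampSum p (l + 2) =
      2 * evenMultiplicity p l := by
  unfold evenRampSum evenMultiplicity
  split_ifs <;> grind

/-- the even case `k = 2p`. If the finitely supported multiplicities
`m : ℤ →₀ ℕ` satisfy, for every `l ∈ ℤ`,
`2·∑ᵢ mᵢ·max(0, i−l+1) = k² + (3−4l)k + 6(l−1)` for `l ≤ 0`,
`= (k−2l+2)(k−2l+1)` for `0 < 2l ≤ k`, and `= 0` for `2l > k`,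
then `m_p = 1`, `m_i = 4` for `1 ≤ i ≤ p−1`, and `m_i = 0` otherwise. -/
theorem direct_image_decomposition_even
    (p : ℕ) (hp : 1 ≤ p) (m : ℤ →₀ ℕ)
    (hm : ∀ l : ℤ,
      2 * ∑ i ∈ m.support, (m i : ℤ) * max 0 (i - l + 1) =
        if l ≤ 0 then
          ((2 * p : ℤ)) ^ 2 + (3 - 4 * l) * (2 * p : ℤ) + 6 * (l - 1)
        else if 2 * l ≤ (2 * p : ℤ) then
          ((2 * p : ℤ) - 2 * l + 2) * ((2 * p : ℤ) - 2 * l + 1)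
        else 0) :
    m (p : ℤ) = 1 ∧
    (∀ i : ℤ, 1 ≤ i → i ≤ (p : ℤ) - 1 → m i = 4) ∧
    (∀ i : ℤ, i ≠ (p : ℤ) → ¬(1 ≤ i ∧ i ≤ (p : ℤ) - 1) → m i = 0) := by
  have hramp (l : ℤ) : 2 * rampSum m l = evenRampSum p l := hm l
  have hmult (i : ℤ) : (m i : ℤ) = evenMultiplicity p i := by
    linarith [rampSum_sub_two_mul_add m i, evenRampSum_sub_two_mul_add hp i,
      hramp i, hramp (i + 1), hramp (i + 2)]
  refine ⟨?_, fun i h₁ h₂ => ?_, fun i h₁ h₂ => ?_⟩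
  · simpa [evenMultiplicity] using hmult p
  · have hi := hmult i
    rw [evenMultiplicity, if_neg (by omega), if_pos ⟨h₁, h₂⟩] at hi
    omega
  · have hi := hmult i
    rw [evenMultiplicity, if_neg h₁, if_neg h₂] at hi
    omega
end

section
/- Let p ≥ 1 and k = 2p+1. Suppose m : ℤ → ℕ is a finitely supported function such that for every integer l, 2·∑_{i∈ℤ} m_i · max(0, i − l + 1) equals: k² + (3−4l)k + 6(l−1) if l ≤ 0; (k−2l+2)(k−2l+1) if 0 < 2l ≤ k; and 0 if 2l > k. Then m_p = 3, m_i = 4 for all 1 ≤ i ≤ p−1, and m_i = 0 for all other i ∈ ℤ. -/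
/-!
The second forward difference of the ramp `l ↦ max 0 (i - l + 1)` is the indicator of `l = i`,
so applying `Δ²` to both sides of the hypothesis turns its left side into `2 mₗ`. The right side
is linear in `l` for `l ≤ 2`, equal to `(2p + 3 - 2l)(2p + 2 - 2l)` for `1 ≤ l ≤ p + 1` and zero
for `l ≥ p + 1`. Its second differences are therefore `0` for `l ≤ 0`, `8` for `1 ≤ l ≤ p - 1`,
`6` at `l = p` and `0` for `l > p`.
-/
open fwdDiff

lemma fwdDiff_iter_two_apply {G : Type*} [AddCommGroup G] (f : ℤ → G) (l : ℤ) :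
    Δ_[1] ^[2] f l = f (l + 2) - 2 • f (l + 1) + f l := by
  simp only [Function.iterate_succ_apply', Function.iterate_zero_apply, fwdDiff, add_assoc]
  norm_num [two_nsmul]
  abel

lemma fwdDiff_iter_two_ramp (i l : ℤ) :
    Δ_[1] ^[2] (fun l => max 0 (i - l + 1)) l = if l = i then 1 else 0 := by
  rw [fwdDiff_iter_two_apply, two_nsmul]
  split_ifs <;> omega

lemma fwdDiff_iter_two_sum_ramp {s : Finset ℤ} {c : ℤ → ℤ} (hc : ∀ i ∉ s, c i = 0) (l : ℤ) :
    Δ_[1] ^[2] (fun l => ∑ i ∈ s, c i * max 0 (i - l + 1)) l = c l := by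
  have hsum : (fun l => ∑ i ∈ s, c i * max 0 (i - l + 1)) =
      ∑ i ∈ s, c i • fun l => max 0 (i - l + 1) := by
    ext; simp
  rw [hsum, fwdDiff_iter_finsetSum, Finset.sum_apply]
  simp only [fwdDiff_iter_const_smul, Pi.smul_apply, fwdDiff_iter_two_ramp, smul_eq_mul, mul_ite,
    mul_one, mul_zero]
  rw [Finset.sum_ite_eq]
  exact ite_eq_left_iff.mpr fun hl => (hc l hl).symm

def oddProfile (p : ℕ) (l : ℤ) : ℤ :=
  if l ≤ 0 then
    ((2 * p + 1 : ℤ)) ^ 2 + (3 - 4 * l) * (2 * p + 1 : ℤ) + 6 * (l - 1)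
  else if 2 * l ≤ (2 * p + 1 : ℤ) then
    ((2 * p + 1 : ℤ) - 2 * l + 2) * ((2 * p + 1 : ℤ) - 2 * l + 1)
  else 0

def oddMultiplicity (p : ℕ) (i : ℤ) : ℤ :=
  if i = p then 3 else if 1 ≤ i ∧ i ≤ (p : ℤ) - 1 then 4 else 0

section oddProfile

variable {p : ℕ} {l : ℤ}

lemma oddProfile_of_le_zero (hl : l ≤ 0) :
    oddProfile p l = (2 * p + 1) ^ 2 + (3 - 4 * l) * (2 * p + 1) + 6 * (l - 1) := by
  simp [oddProfile, hl]

lemma oddProfile_of_pos_of_le (h₁ : 1 ≤ l) (h₂ : l ≤ p + 1) :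
    oddProfile p l = (2 * p + 1 - 2 * l + 2) * (2 * p + 1 - 2 * l + 1) := by
  unfold oddProfile
  rcases h₂.lt_or_eq with h | rfl
  · rw [if_neg (by omega), if_pos (by omega)]
  · rw [if_neg (by omega), if_neg (by omega)]
    ring

lemma oddProfile_of_le_two (hp : 1 ≤ p) (hl : l ≤ 2) :
    oddProfile p l = (2 * p + 1) ^ 2 + (3 - 4 * l) * (2 * p + 1) + 6 * (l - 1) := by
  rcases le_or_gt l 0 with h | h
  · exact oddProfile_of_le_zero h
  · rw [oddProfile_of_pos_of_le h (by omega)]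
    interval_cases l <;> ring

lemma oddProfile_of_ge (hl : p + 1 ≤ l) : oddProfile p l = 0 := by
  rcases hl.lt_or_eq with h | rfl
  · simp only [oddProfile]
    rw [if_neg (by omega), if_neg (by omega)]
  · rw [oddProfile_of_pos_of_le (by omega) le_rfl]
    ring

lemma fwdDiff_iter_two_oddProfile (hp : 1 ≤ p) (l : ℤ) :
    Δ_[1] ^[2] (oddProfile p) l = 2 * oddMultiplicity p l := by
  rw [fwdDiff_iter_two_apply, two_nsmul, oddMultiplicity]
  rcases le_or_gt l 0 with h₀ | h₀
  · rw [oddProfile_of_le_two hp (by omega), oddProfile_of_le_two hp (by omega),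
      oddProfile_of_le_two hp (by omega), if_neg (by omega), if_neg (by omega)]
    ring
  rcases lt_trichotomy l p with hlt | rfl | hgt
  · rw [oddProfile_of_pos_of_le (by omega) (by omega), oddProfile_of_pos_of_le (by omega) (by omega),
      oddProfile_of_pos_of_le (by omega) (by omega), if_neg (by omega), if_pos (by omega)]
    ring
  · rw [oddProfile_of_ge (by omega), oddProfile_of_ge (by omega),
      oddProfile_of_pos_of_le (by omega) (by omega), if_pos rfl]
    ring
  · rw [oddProfile_of_ge (by omega), oddProfile_of_ge (by omega), oddProfile_of_ge (by omega),
      if_neg (by omega), if_neg (by omega)]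
    ring

end oddProfile

/-- the odd case `k = 2p+1`. If the finitely supported multiplicities
`m : ℤ →₀ ℕ` satisfy, for every `l ∈ ℤ`,
`2·∑ᵢ mᵢ·max(0, i−l+1) = k² + (3−4l)k + 6(l−1)` for `l ≤ 0`,
`= (k−2l+2)(k−2l+1)` for `0 < 2l ≤ k`, and `= 0` for `2l > k`,
then `m_p = 3`, `m_i = 4` for `1 ≤ i ≤ p−1`, and `m_i = 0` otherwise. -/
theorem direct_image_decomposition_odd
    (p : ℕ) (hp : 1 ≤ p) (m : ℤ →₀ ℕ)
    (hm : ∀ l : ℤ,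
      2 * ∑ i ∈ m.support, (m i : ℤ) * max 0 (i - l + 1) =
        if l ≤ 0 then
          ((2 * p + 1 : ℤ)) ^ 2 + (3 - 4 * l) * (2 * p + 1 : ℤ) + 6 * (l - 1)
        else if 2 * l ≤ (2 * p + 1 : ℤ) then
          ((2 * p + 1 : ℤ) - 2 * l + 2) * ((2 * p + 1 : ℤ) - 2 * l + 1)
        else 0) :
    m (p : ℤ) = 3 ∧
    (∀ i : ℤ, 1 ≤ i → i ≤ (p : ℤ) - 1 → m i = 4) ∧
    (∀ i : ℤ, i ≠ (p : ℤ) → ¬(1 ≤ i ∧ i ≤ (p : ℤ) - 1) → m i = 0) := by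
  have hprofile : oddProfile p = 2 • fun l => ∑ i ∈ m.support, (m i : ℤ) * max 0 (i - l + 1) :=
    funext fun l => (hm l).symm
  have hmult (i : ℤ) : (m i : ℤ) = oddMultiplicity p i := by
    have h := fwdDiff_iter_two_oddProfile hp i
    rw [hprofile, fwdDiff_iter_const_smul, Pi.smul_apply,
      fwdDiff_iter_two_sum_ramp fun i hi => by simpa using hi] at h
    simpa using h
  refine ⟨by exact_mod_cast (hmult p).trans (if_pos rfl), fun i h₁ h₂ => ?_, fun i h₁ h₂ => ?_⟩
  · have := hmult i
    rw [oddMultiplicity, if_neg (by omega), if_pos ⟨h₁, h₂⟩] at this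
    omega
  · have := hmult i
    rw [oddMultiplicity, if_neg h₁, if_neg h₂] at this
    omega
end
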